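/- arXiv:1508.04812 — 3 statements merged into one kernel-verified Lean document; each statement's English description precedes it below -/
import Mathlib

section
/- Let X = (X_1,…,X_I) follow a Dirichlet(α,…,α) distribution with 0 < α < 1, truncated to the region where all coordinates exceed τ, with τ < ε² and ε < 1/I. Then for any point (x_{10},…,x_{I0}) of the I-simplex, P(Σ_{i=1}^I |X_i − x_{i0}| ≤ 2ε) ≥ (Γ(αI)/Γ(α)^I) (ε² − τ)^I. -/
/-!
Pull x₀ towards the interior of the simplex: on the box of side δ = ε² - τ with corner
(1 - ε)x₀ + ρ in the first m coordinates, the choice (m + 1)ρ + mδ = ε gives the last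
coordinate 1 - ∑ y the same margin, so every coordinate of the lifted point is at least
(1 - ε)x₀ⱼ + ρ > τ. Such a point lies in the truncated region, and its negative deviations
from x₀ sum to at most ε, so its L¹-distance to x₀ is at most 2ε. Since α < 1, the density
∏ xⱼ^(α-1) is at least 1 on the simplex, so the box carries mass at least δ^m ≥ δ^(m+1).
-/

open MeasureTheory Finset

lemma sum_abs_sub_le_two_mul_of_mul_le {ι : Type*} [Fintype ι] {u v : ι → ℝ} {θ : ℝ}
    (hθ : 0 ≤ θ) (hv : ∀ j, 0 ≤ v j) (hsum : ∑ j, u j = ∑ j, v j)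
    (hu : ∀ j, (1 - θ) * v j ≤ u j) :
    ∑ j, |u j - v j| ≤ 2 * θ * ∑ j, v j := by
  have habs : ∀ j, |u j - v j| = (u j - v j) + 2 * max (v j - u j) 0 := fun j => by
    rcases le_total (u j) (v j) with h | h
    · rw [abs_of_nonpos (by linarith), max_eq_left (by linarith)]; ring
    · rw [abs_of_nonneg (by linarith), max_eq_right (by linarith)]; ring
  have hdeficit : ∀ j, max (v j - u j) 0 ≤ θ * v j := fun j =>
    max_le (by linarith [hu j]) (mul_nonneg hθ (hv j))
  calc ∑ j, |u j - v j| = 2 * ∑ j, max (v j - u j) 0 := by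
        simp only [habs, sum_add_distrib, sum_sub_distrib, hsum, sub_self, zero_add, mul_sum]
    _ ≤ 2 * ∑ j, θ * v j := by gcongr with j; exact hdeficit j
    _ = 2 * θ * ∑ j, v j := by rw [← mul_sum, mul_assoc]

lemma one_le_prod_rpow_of_sum_eq_one {ι : Type*} [Fintype ι] {u : ι → ℝ} {β : ℝ}
    (hβ : β ≤ 0) (hu : ∀ j, 0 < u j) (hsum : ∑ j, u j = 1) :
    1 ≤ ∏ j, u j ^ β := by
  have hu1 : ∀ j, u j ≤ 1 := fun j =>
    hsum ▸ single_le_sum (fun k _ => (hu k).le) (mem_univ j)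
  exact one_le_prod fun j _ => Real.one_le_rpow_of_pos_of_le_one_of_nonpos (hu j) (hu1 j) hβ

lemma measureReal_le_setIntegral_of_one_le {X : Type*} [TopologicalSpace X] [T2Space X]
    [MeasurableSpace X] [OpensMeasurableSpace X] {μ : Measure X} [IsFiniteMeasureOnCompacts μ]
    {K : Set X} {f : X → ℝ} (hK : IsCompact K) (hf : ContinuousOn f K)
    (h1 : ∀ x ∈ K, 1 ≤ f x) :
    μ.real K ≤ ∫ x in K, f x ∂μ := by
  simpa using setIntegral_ge_of_const_le_real hK.measurableSet hK.measure_ne_top h1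
    (hf.integrableOn_compact hK)

def simplexLift {m : ℕ} (y : Fin m → ℝ) : Fin (m + 1) → ℝ :=
  Fin.snoc y (1 - ∑ i, y i)

section simplexLift

variable {m : ℕ} (y : Fin m → ℝ)

@[simp]
lemma simplexLift_castSucc (i : Fin m) : simplexLift y i.castSucc = y i :=
  Fin.snoc_castSucc ..

@[simp]
lemma simplexLift_last : simplexLift y (Fin.last m) = 1 - ∑ i, y i :=
  Fin.snoc_last ..

lemma sum_simplexLift : ∑ j, simplexLift y j = 1 := by
  simp [Fin.sum_univ_castSucc]

lemma sum_abs_simplexLift_sub (x : Fin (m + 1) → ℝ) :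
    ∑ j, |simplexLift y j - x j| =
      (∑ i, |y i - x i.castSucc|) + |(1 - ∑ i, y i) - x (Fin.last m)| := by
  simp [Fin.sum_univ_castSucc]

lemma prod_simplexLift_rpow (β : ℝ) :
    ∏ j, simplexLift y j ^ β = (∏ i, y i ^ β) * (1 - ∑ i, y i) ^ β := by
  simp [Fin.prod_univ_castSucc]

lemma forall_lt_simplexLift_iff (τ : ℝ) :
    (∀ j, τ < simplexLift y j) ↔ (∀ i, τ < y i) ∧ τ < 1 - ∑ i, y i := by
  simp [Fin.forall_fin_succ']

omit y in
lemma continuous_simplexLift : Continuous (simplexLift (m := m)) := by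
  unfold simplexLift; fun_prop

end simplexLift

lemma le_simplexLift_of_mem_Icc {m : ℕ} {x : Fin (m + 1) → ℝ} (hx : ∑ j, x j = 1)
    {θ ρ δ : ℝ} (hρ : (m + 1) * ρ + m * δ = θ) {y : Fin m → ℝ}
    (hy : y ∈ Set.Icc (fun i => (1 - θ) * x i.castSucc + ρ)
      (fun i => (1 - θ) * x i.castSucc + ρ + δ)) (j : Fin (m + 1)) :
    (1 - θ) * x j + ρ ≤ simplexLift y j := by
  revert j
  rw [Fin.forall_fin_succ']
  refine ⟨fun i => by simpa using hy.1 i, ?_⟩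
  have hsum_y : ∑ i, y i ≤ ∑ i : Fin m, ((1 - θ) * x i.castSucc + ρ + δ) :=
    sum_le_sum fun i _ => hy.2 i
  rw [Fin.sum_univ_castSucc] at hx
  simp only [sum_add_distrib, ← mul_sum, sum_const, card_univ, Fintype.card_fin,
    nsmul_eq_mul] at hsum_y
  simp only [simplexLift_last]
  linear_combination hsum_y + (1 - θ) * hx + hρ

lemma pow_le_setIntegral_prod_simplexLift_rpow {m : ℕ} {a : Fin m → ℝ} {δ β : ℝ}
    (hδ : 0 ≤ δ) (hβ : β ≤ 0)
    (hpos : ∀ y ∈ Set.Icc a (fun i => a i + δ), ∀ j, 0 < simplexLift y j) :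
    δ ^ m ≤ ∫ y in Set.Icc a (fun i => a i + δ), ∏ j, simplexLift y j ^ β := by
  have hvol : volume.real (Set.Icc a fun i => a i + δ) = δ ^ m := by
    rw [Measure.real, Real.volume_Icc_pi_toReal fun i => by linarith]; simp
  rw [← hvol]
  refine measureReal_le_setIntegral_of_one_le isCompact_Icc ?_
    fun y hy => one_le_prod_rpow_of_sum_eq_one hβ (hpos y hy) (sum_simplexLift y)
  exact continuousOn_finsetProd _ fun j _ => ((continuous_apply j).comp
    continuous_simplexLift).continuousOn.rpow_const fun y hy => Or.inl (hpos y hy j).ne'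

theorem truncated_dirichlet_ball_mass_general
    (m : ℕ) (α τ ε : ℝ) (hα : 0 < α) (hα1 : α < 1)
    (hτ0 : 0 ≤ τ) (hτ : τ < ε ^ 2) (hε : 0 < ε) (hεI : ε < 1 / ((m : ℝ) + 1))
    (x₀ : Fin (m + 1) → ℝ) (hx₀ : ∀ i, 0 ≤ x₀ i) (hsum₀ : ∑ i, x₀ i = 1)
    (P : Measure (Fin m → ℝ))
    (hP : ∀ A : Set (Fin m → ℝ), MeasurableSet A →
      ENNReal.ofReal
        (Real.Gamma (α * ((m : ℝ) + 1)) / (Real.Gamma α) ^ (m + 1) *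
          ∫ y in A ∩ {y : Fin m → ℝ | (∀ i, τ < y i) ∧ τ < 1 - ∑ i, y i},
            (∏ i, (y i) ^ (α - 1)) * (1 - ∑ i, y i) ^ (α - 1))
        ≤ P A) :
    ENNReal.ofReal
        (Real.Gamma (α * ((m : ℝ) + 1)) / (Real.Gamma α) ^ (m + 1) *
          (ε ^ 2 - τ) ^ (m + 1))
      ≤ P {y : Fin m → ℝ |
            (∑ i : Fin m, |y i - x₀ i.castSucc|) +
              |(1 - ∑ i, y i) - x₀ (Fin.last m)| ≤ 2 * ε} := by
  have hεm : ε * (m + 1) < 1 := (lt_div_iff₀ (by positivity)).1 hεI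
  set δ := ε ^ 2 - τ
  set ρ := (ε - m * δ) / (m + 1)
  have hρ : (m + 1) * ρ + m * δ = ε := by simp only [ρ]; field_simp; ring
  have hτρ : τ < ρ := by rw [lt_div_iff₀ (by positivity)]; nlinarith
  set K := Set.Icc (fun i : Fin m => (1 - ε) * x₀ i.castSucc + ρ)
    (fun i => (1 - ε) * x₀ i.castSucc + ρ + δ)
  have hfloor : ∀ y ∈ K, ∀ j, (1 - ε) * x₀ j ≤ simplexLift y j ∧ τ < simplexLift y j :=
    fun y hy j => by
      have := le_simplexLift_of_mem_Icc hsum₀ hρ hy j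
      have := mul_nonneg (by nlinarith : 0 ≤ 1 - ε) (hx₀ j)
      constructor <;> linarith
  have hKS : K ⊆ {y | (∀ i, τ < y i) ∧ τ < 1 - ∑ i, y i} := fun y hy =>
    (forall_lt_simplexLift_iff y τ).1 fun j => (hfloor y hy j).2
  have hKE : K ⊆ {y | (∑ i : Fin m, |y i - x₀ i.castSucc|) +
      |(1 - ∑ i, y i) - x₀ (Fin.last m)| ≤ 2 * ε} := fun y hy => by
    rw [Set.mem_ofPred_eq, ← sum_abs_simplexLift_sub]
    simpa [hsum₀] using sum_abs_sub_le_two_mul_of_mul_le hε.le hx₀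
      (by rw [sum_simplexLift, hsum₀]) fun j => (hfloor y hy j).1
  have hmass : δ ^ (m + 1) ≤ ∫ y in K, ∏ j, simplexLift y j ^ (α - 1) :=
    (pow_le_pow_of_le_one (by linarith) (by nlinarith) m.le_succ).trans
      (pow_le_setIntegral_prod_simplexLift_rpow (by linarith) (by linarith)
        fun y hy j => hτ0.trans_lt (hfloor y hy j).2)
  have hC : 0 ≤ Real.Gamma (α * ((m : ℝ) + 1)) / (Real.Gamma α) ^ (m + 1) :=
    div_nonneg (Real.Gamma_pos_of_pos (by positivity)).le
      (pow_nonneg (Real.Gamma_pos_of_pos hα).le _)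
  simp only [prod_simplexLift_rpow] at hmass
  calc _ ≤ _ := ENNReal.ofReal_le_ofReal (mul_le_mul_of_nonneg_left hmass hC)
    _ ≤ P K := by simpa only [Set.inter_eq_left.2 hKS] using hP K measurableSet_Icc
    _ ≤ _ := measure_mono hKE

/-- Let `(X₁,…,X_I)` follow a Dirichlet(α,…,α) distribution (`0 < α < 1`)
truncated to `{∀ i, X i > τ}`, with `τ < ε²` and `ε < 1/I`.  The distribution is
represented through its first `I-1` coordinates `y`, the last coordinate being
`1 - ∑ y`; the truncation makes the normalizing constant at least
`Γ(αI)/Γ(α)^I` times the unnormalized density `∏ yᵢ^{α-1}`.  Then for any point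
`x₀` of the `I`-simplex,
`P(∑ᵢ |Xᵢ - x₀ᵢ| ≤ 2ε) ≥ (Γ(αI)/Γ(α)^I) (ε² - τ)^I`. -/
theorem truncated_dirichlet_ball_mass
    (m : ℕ) (hm : 1 ≤ m) (α τ ε : ℝ) (hα : 0 < α) (hα1 : α < 1)
    (hτ0 : 0 ≤ τ) (hτ : τ < ε ^ 2) (hε : 0 < ε) (hεI : ε < 1 / ((m : ℝ) + 1))
    (x₀ : Fin (m + 1) → ℝ) (hx₀ : ∀ i, 0 ≤ x₀ i) (hsum₀ : ∑ i, x₀ i = 1)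
    (P : Measure (Fin m → ℝ)) [IsProbabilityMeasure P]
    (hP : ∀ A : Set (Fin m → ℝ), MeasurableSet A →
      ENNReal.ofReal
        (Real.Gamma (α * ((m : ℝ) + 1)) / (Real.Gamma α) ^ (m + 1) *
          ∫ y in A ∩ {y : Fin m → ℝ | (∀ i, τ < y i) ∧ τ < 1 - ∑ i, y i},
            (∏ i, (y i) ^ (α - 1)) * (1 - ∑ i, y i) ^ (α - 1))
        ≤ P A) :
    ENNReal.ofReal
        (Real.Gamma (α * ((m : ℝ) + 1)) / (Real.Gamma α) ^ (m + 1) *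
          (ε ^ 2 - τ) ^ (m + 1))
      ≤ P {y : Fin m → ℝ |
            (∑ i : Fin m, |y i - x₀ i.castSucc|) +
              |(1 - ∑ i, y i) - x₀ (Fin.last m)| ≤ 2 * ε} :=
  truncated_dirichlet_ball_mass_general m α τ ε hα hα1 hτ0 hτ hε hεI x₀ hx₀ hsum₀ P hP
end

section
/- Let f, f₀ be density functions with squared Hellinger distance ρ²(f,f₀) ≤ ε², and suppose M_δ² = ∫_{{f₀/f ≥ e^{1/δ}}} f₀ (f₀/f)^δ < ∞ for some δ ∈ (0,1]. Then for all ε² ≤ (1/2)(1 − e^{−1})², the Kullback–Leibler divergence satisfies ∫ f₀ log(f₀/f) ≤ [6 + 2 log 2/(1−e^{−1})² + (8/δ) max(1, log(M_δ/ε))] ε². -/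
/-!
Split `Ω` along `A = {f₀ / f ≥ e^κ}` with `κ = 2 + 1/δ`. Off `A` the ratio `s = √(f / f₀)`
is at least `e^{-κ/2}`, where `s - 1 - log s ≤ κ (1 - s)²`; this bounds `f₀ log (f₀ / f)`
pointwise by `(1 + 2κ)(√f - √f₀)² + (f₀ - f)`, whose integral is `(1 + 2κ) ρ²`. On `A` one
has `√f ≤ e^{-1} √f₀`, so `P(A) = ∫_A f₀ ≤ ε² / (1 - e^{-1})²`, and Jensen's inequality for
`log` against the weight `f₀` on `A`, fed with the moment bound, gives
`δ ∫_A f₀ log (f₀ / f) ≤ P(A) log (M_δ² / P(A))`, which `p log (ε² / p) ≤ ε² / e` controls.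
-/

open MeasureTheory Real

namespace Real

lemma sub_one_sub_log_le_mul_sq {κ s : ℝ} (hκ : 2 ≤ κ) (hs : exp (-(κ / 2)) ≤ s) :
    s - 1 - log s ≤ κ * (1 - s) ^ 2 := by
  have hs0 : 0 < s := (exp_pos _).trans_le hs
  have hslog : s - 1 ≤ s * log s := by
    have := mul_le_mul_of_nonneg_left (one_sub_inv_le_log_of_pos hs0) hs0.le
    rwa [mul_sub, mul_one, mul_inv_cancel₀ hs0.ne'] at this
  rcases le_or_gt (1 / 2) s with hs2 | hs2
  · have hmul : s * (s - 1 - log s) ≤ (1 - s) ^ 2 := by nlinarith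
    nlinarith [sq_nonneg (1 - s), mul_nonneg (sub_nonneg.2 hs2) (sq_nonneg (1 - s))]
  · have hL : -log s ≤ κ / 2 := by
      rw [neg_le]
      exact (le_log_iff_exp_le hs0).2 hs
    have hL0 : 0 ≤ -log s := neg_nonneg.2 (log_nonpos hs0.le (by linarith))
    have hsmall : s - 1 - log s ≤ 2 * -log s * (1 - s) ^ 2 := by
      rcases le_or_gt 1 (2 * (1 - s) ^ 2) with hu | hu
      · nlinarith [mul_nonneg hL0 (sub_nonneg.2 hu)]
      · nlinarith [mul_le_mul_of_nonneg_right hslog (by linarith : (0:ℝ) ≤ 1 - 2 * (1 - s) ^ 2)]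
    nlinarith [sq_nonneg (1 - s)]

lemma log_le_exp_neg_one_mul {t : ℝ} (ht : 0 < t) : log t ≤ exp (-1) * t := by
  have h := mul_exp_neg_le_exp_neg_one (log t)
  rwa [exp_neg, exp_log ht, ← div_eq_mul_inv, div_le_iff₀ ht] at h

lemma mul_log_div_le {p u : ℝ} (hp : 0 ≤ p) (hu : 0 < u) : p * log (u / p) ≤ exp (-1) * u := by
  rcases hp.eq_or_lt with rfl | hp
  · rw [zero_mul]; positivity
  calc p * log (u / p) ≤ p * (exp (-1) * (u / p)) :=
        mul_le_mul_of_nonneg_left (log_le_exp_neg_one_mul (div_pos hu hp)) hp.le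
    _ = exp (-1) * u := by field_simp

lemma pos_and_exp_mul_le_of_exp_le_div {κ p q : ℝ} (hq : 0 ≤ q) (h : exp κ ≤ p / q) :
    0 < q ∧ exp κ * q ≤ p := by
  rcases hq.eq_or_lt with rfl | hq
  · rw [div_zero] at h
    exact absurd h (exp_pos κ).not_ge
  · exact ⟨hq, (le_div_iff₀ hq).1 h⟩

lemma sq_one_sub_exp_mul_le_sq_sqrt_sub_sqrt {κ p q : ℝ} (hκ : 0 ≤ κ) (hq : 0 ≤ q)
    (h : exp κ ≤ p / q) : (1 - exp (-(κ / 2))) ^ 2 * p ≤ (√q - √p) ^ 2 := by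
  obtain ⟨hq, hqp⟩ := pos_and_exp_mul_le_of_exp_le_div hq h
  have hp : 0 ≤ p := (mul_pos (exp_pos κ) hq).le.trans hqp
  have hsqrt : √q ≤ exp (-(κ / 2)) * √p := by
    rw [← neg_div, exp_half, ← sqrt_mul (exp_pos _).le]
    refine sqrt_le_sqrt ?_
    rw [exp_neg, inv_mul_eq_div, le_div_iff₀ (exp_pos _), mul_comm]
    exact hqp
  have hc : 0 ≤ 1 - exp (-(κ / 2)) := sub_nonneg.2 (exp_le_one_iff.2 (by linarith))
  calc (1 - exp (-(κ / 2))) ^ 2 * p = ((1 - exp (-(κ / 2))) * √p) ^ 2 := by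
        rw [mul_pow, sq_sqrt hp]
    _ ≤ (√p - √q) ^ 2 := pow_le_pow_left₀ (mul_nonneg hc (sqrt_nonneg _)) (by linarith) 2
    _ = (√q - √p) ^ 2 := by ring

lemma mul_log_div_le_of_div_le_exp {κ p q : ℝ} (hκ : 2 ≤ κ) (hp : 0 ≤ p) (hq : 0 ≤ q)
    (h : p / q ≤ exp κ) : p * log (p / q) ≤ (1 + 2 * κ) * (√q - √p) ^ 2 + (p - q) := by
  rcases hp.eq_or_lt with rfl | hp
  · simp only [zero_mul, sqrt_zero, sub_zero, zero_sub, sq_sqrt hq]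
    nlinarith
  rcases hq.eq_or_lt with rfl | hq
  · simp only [div_zero, log_zero, mul_zero, sqrt_zero, zero_sub, neg_sq, sq_sqrt hp.le, sub_zero]
    nlinarith
  obtain ⟨a, ha, rfl⟩ : ∃ a, 0 < a ∧ a ^ 2 = p := ⟨√p, sqrt_pos.2 hp, sq_sqrt hp.le⟩
  obtain ⟨b, hb, rfl⟩ : ∃ b, 0 < b ∧ b ^ 2 = q := ⟨√q, sqrt_pos.2 hq, sq_sqrt hq.le⟩
  rw [sqrt_sq ha.le, sqrt_sq hb.le]
  have hab : a / b ≤ exp (κ / 2) := by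
    rw [← pow_le_pow_iff_left₀ (by positivity) (exp_pos _).le two_ne_zero, div_pow, sq (exp _),
      ← exp_add, add_halves]
    exact h
  have hba : exp (-(κ / 2)) ≤ b / a := by
    rw [exp_neg, ← inv_div a b]
    exact inv_anti₀ (div_pos ha hb) hab
  have hlog : log (a ^ 2 / b ^ 2) = -2 * log (b / a) := by
    rw [← div_pow, log_pow, ← inv_div, log_inv]
    push_cast
    ring
  have hkey := sub_one_sub_log_le_mul_sq hκ hba
  calc a ^ 2 * log (a ^ 2 / b ^ 2)
      ≤ a ^ 2 * (2 * (1 - b / a) + 2 * κ * (1 - b / a) ^ 2) := by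
        rw [hlog]; gcongr; linarith
    _ = (1 + 2 * κ) * (b - a) ^ 2 + (a ^ 2 - b ^ 2) := by
        field_simp
        ring

lemma mul_log_sq_div_le {p a ε : ℝ} (hp : 0 ≤ p) (ha : a ≠ 0) (hε : 0 < ε) :
    p * log (a ^ 2 / p) ≤ 2 * p * log (a / ε) + exp (-1) * ε ^ 2 := by
  rcases hp.eq_or_lt with rfl | hp
  · rw [zero_mul, mul_zero, zero_mul, zero_add]
    positivity
  have hsplit : a ^ 2 / p = (a / ε) ^ 2 * (ε ^ 2 / p) := by field_simp
  rw [hsplit, log_mul (by positivity) (by positivity), log_pow, mul_add]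
  push_cast
  linarith [mul_log_div_le hp.le (by positivity : 0 < ε ^ 2)]

lemma sq_sqrt_sub_sqrt_le_abs_add_abs (a b : ℝ) : (√a - √b) ^ 2 ≤ |a| + |b| := by
  have ha : √a ^ 2 ≤ |a| := by
    rw [← sq_sqrt (abs_nonneg a)]
    exact pow_le_pow_left₀ (sqrt_nonneg a) (sqrt_le_sqrt (le_abs_self a)) 2
  have hb : √b ^ 2 ≤ |b| := by
    rw [← sq_sqrt (abs_nonneg b)]
    exact pow_le_pow_left₀ (sqrt_nonneg b) (sqrt_le_sqrt (le_abs_self b)) 2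
  nlinarith [mul_nonneg (sqrt_nonneg a) (sqrt_nonneg b)]

end Real

section Integral

variable {Ω : Type*} [MeasurableSpace Ω] {μ : Measure Ω} {f f₀ : Ω → ℝ}

lemma MeasureTheory.Integrable.sq_sqrt_sub_sqrt (hf : Integrable f μ) (hf₀ : Integrable f₀ μ) :
    Integrable (fun x => (√(f x) - √(f₀ x)) ^ 2) μ := by
  refine (hf.abs.add hf₀.abs).mono' ?_ (ae_of_all _ fun x => ?_)
  · exact ((continuous_sqrt.comp_aestronglyMeasurable hf.1).sub
      (continuous_sqrt.comp_aestronglyMeasurable hf₀.1)).pow 2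
  · rw [norm_of_nonneg (sq_nonneg _)]
    exact sq_sqrt_sub_sqrt_le_abs_add_abs _ _

lemma nullMeasurableSet_exp_le_div (κ : ℝ) (hf : AEStronglyMeasurable f μ)
    (hf₀ : AEStronglyMeasurable f₀ μ) : NullMeasurableSet {x | exp κ ≤ f₀ x / f x} μ :=
  nullMeasurableSet_le aemeasurable_const (hf₀.aemeasurable.div hf.aemeasurable)

lemma setIntegral_compl_mul_log_div_le {κ : ℝ} (hκ : 2 ≤ κ) (hf : Integrable f μ)
    (hf₀ : Integrable f₀ μ) (hf0 : ∀ x, 0 ≤ f x) (hf₀0 : ∀ x, 0 ≤ f₀ x)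
    (hmass : ∫ x, f₀ x ∂μ ≤ ∫ x, f x ∂μ)
    (hK : Integrable (fun x => f₀ x * log (f₀ x / f x)) μ) :
    ∫ x in {x | exp κ ≤ f₀ x / f x}ᶜ, f₀ x * log (f₀ x / f x) ∂μ
      ≤ (1 + 2 * κ) * ∫ x, (√(f x) - √(f₀ x)) ^ 2 ∂μ := by
  set A := {x | exp κ ≤ f₀ x / f x}
  set ψ := fun x => (1 + 2 * κ) * (√(f x) - √(f₀ x)) ^ 2 + (f₀ x - f x)
  have hA : NullMeasurableSet A μ := nullMeasurableSet_exp_le_div κ hf.1 hf₀.1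
  have hH := hf.sq_sqrt_sub_sqrt hf₀
  have hsub : Integrable (fun x => f₀ x - f x) μ := hf₀.sub hf
  have hψ : Integrable ψ μ := (hH.const_mul _).add hsub
  have hψA : 0 ≤ ∫ x in A, ψ x ∂μ := by
    refine setIntegral_nonneg_of_ae_restrict ((ae_restrict_mem₀ hA).mono fun x hx => ?_)
    obtain ⟨hfx, hle⟩ := pos_and_exp_mul_le_of_exp_le_div (hf0 x) hx
    have : f x ≤ f₀ x := (le_mul_of_one_le_left hfx.le (one_le_exp (by linarith))).trans hle
    have : 0 ≤ (1 + 2 * κ) * (√(f x) - √(f₀ x)) ^ 2 := by positivity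
    simp only [Pi.zero_apply, ψ]
    linarith
  calc ∫ x in Aᶜ, f₀ x * log (f₀ x / f x) ∂μ ≤ ∫ x in Aᶜ, ψ x ∂μ :=
        setIntegral_mono_on₀ hK.integrableOn hψ.integrableOn hA.compl
          fun x (hx : ¬exp κ ≤ f₀ x / f x) =>
            mul_log_div_le_of_div_le_exp hκ (hf₀0 x) (hf0 x) (not_le.1 hx).le
    _ ≤ ∫ x, ψ x ∂μ := by linarith [integral_add_compl₀ hA hψ]
    _ = (1 + 2 * κ) * (∫ x, (√(f x) - √(f₀ x)) ^ 2 ∂μ) + (∫ x, f₀ x ∂μ - ∫ x, f x ∂μ) := by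
        rw [integral_add (hH.const_mul _) hsub, integral_const_mul, integral_sub hf₀ hf]
    _ ≤ _ := by linarith

lemma sq_one_sub_exp_mul_setIntegral_le {κ : ℝ} (hκ : 0 ≤ κ) (hf : Integrable f μ)
    (hf₀ : Integrable f₀ μ) (hf0 : ∀ x, 0 ≤ f x) :
    (1 - exp (-(κ / 2))) ^ 2 * ∫ x in {x | exp κ ≤ f₀ x / f x}, f₀ x ∂μ
      ≤ ∫ x, (√(f x) - √(f₀ x)) ^ 2 ∂μ := by
  have hH := hf.sq_sqrt_sub_sqrt hf₀
  rw [← integral_const_mul]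
  calc ∫ x in {x | exp κ ≤ f₀ x / f x}, (1 - exp (-(κ / 2))) ^ 2 * f₀ x ∂μ
      ≤ ∫ x in {x | exp κ ≤ f₀ x / f x}, (√(f x) - √(f₀ x)) ^ 2 ∂μ :=
        setIntegral_mono_on₀ (hf₀.const_mul _).integrableOn hH.integrableOn
          (nullMeasurableSet_exp_le_div κ hf.1 hf₀.1) fun x hx =>
            sq_one_sub_exp_mul_le_sq_sqrt_sub_sqrt hκ (hf0 x) hx
    _ ≤ _ := setIntegral_le_integral hH (ae_of_all _ fun x => sq_nonneg _)

lemma mul_integral_mul_log_le_mul_log_div {ν : Measure Ω} {w y : Ω → ℝ} {δ Y : ℝ}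
    (hw : 0 ≤ᵐ[ν] w) (hy : ∀ᵐ x ∂ν, 0 < y x) (hwi : Integrable w ν)
    (hwy : Integrable (fun x => w x * y x ^ δ) ν)
    (hwlog : Integrable (fun x => w x * log (y x)) ν)
    (hY : 0 < Y) (hwyY : ∫ x, w x * y x ^ δ ∂ν ≤ Y) :
    δ * ∫ x, w x * log (y x) ∂ν ≤ (∫ x, w x ∂ν) * log (Y / ∫ x, w x ∂ν) := by
  rcases (integral_nonneg_of_ae hw).eq_or_lt with hW | hW
  · have hw0 : w =ᵐ[ν] 0 := (integral_eq_zero_iff_of_nonneg_ae hw hwi).1 hW.symm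
    rw [← hW, zero_mul, integral_eq_zero_of_ae (hw0.mono fun x hx => by simp [hx]), mul_zero]
  set W := ∫ x, w x ∂ν
  set m := Y / W
  have hm : 0 < m := div_pos hY hW
  have hpt : ∀ᵐ x ∂ν, δ * (w x * log (y x)) ≤ w x * log m + w x * y x ^ δ / m - w x := by
    filter_upwards [hw, hy] with x hwx hyx
    have hyδ := rpow_pos_of_pos hyx δ
    have h := log_le_sub_one_of_pos (div_pos hyδ hm)
    rw [log_div hyδ.ne' hm.ne', log_rpow hyx] at h
    have := mul_le_mul_of_nonneg_left h hwx
    have e1 : w x * (δ * log (y x) - log m) = δ * (w x * log (y x)) - w x * log m := by ring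
    have e2 : w x * (y x ^ δ / m - 1) = w x * y x ^ δ / m - w x := by ring
    linarith
  have h1 : Integrable (fun x => w x * log m) ν := hwi.mul_const _
  have h2 : Integrable (fun x => w x * y x ^ δ / m) ν := hwy.div_const m
  have h12 : Integrable (fun x => w x * log m + w x * y x ^ δ / m) ν := h1.add h2
  calc δ * ∫ x, w x * log (y x) ∂ν = ∫ x, δ * (w x * log (y x)) ∂ν :=
        (integral_const_mul _ _).symm
    _ ≤ ∫ x, w x * log m + w x * y x ^ δ / m - w x ∂ν :=
        integral_mono_ae (hwlog.const_mul δ) (h12.sub hwi) hpt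
    _ = W * log m + (∫ x, w x * y x ^ δ ∂ν) / m - W := by
        rw [integral_sub h12 hwi, integral_add h1 h2, integral_mul_const, integral_div]
    _ ≤ W * log m + Y / m - W := by gcongr
    _ = W * log m := by rw [div_div_cancel₀ hY.ne']; ring

lemma mul_setIntegral_mul_log_div_le {κ δ Y : ℝ} (hκ : 1 / δ ≤ κ)
    (hf : AEStronglyMeasurable f μ) (hf₀ : Integrable f₀ μ) (hf0 : ∀ x, 0 ≤ f x)
    (hf₀0 : ∀ x, 0 ≤ f₀ x)
    (hK : Integrable (fun x => f₀ x * log (f₀ x / f x)) μ) (hY : 0 < Y)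
    (hfin : IntegrableOn (fun x => f₀ x * (f₀ x / f x) ^ δ) {x | exp (1 / δ) ≤ f₀ x / f x} μ)
    (hmoment : ∫ x in {x | exp (1 / δ) ≤ f₀ x / f x}, f₀ x * (f₀ x / f x) ^ δ ∂μ ≤ Y) :
    δ * ∫ x in {x | exp κ ≤ f₀ x / f x}, f₀ x * log (f₀ x / f x) ∂μ
      ≤ (∫ x in {x | exp κ ≤ f₀ x / f x}, f₀ x ∂μ)
        * log (Y / ∫ x in {x | exp κ ≤ f₀ x / f x}, f₀ x ∂μ) := by
  have hsub : {x | exp κ ≤ f₀ x / f x} ⊆ {x | exp (1 / δ) ≤ f₀ x / f x} :=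
    fun x hx => (exp_le_exp.2 hκ).trans hx
  refine mul_integral_mul_log_le_mul_log_div (ae_of_all _ hf₀0)
    ((ae_restrict_mem₀ (nullMeasurableSet_exp_le_div κ hf hf₀.1)).mono
      fun x hx => (exp_pos κ).trans_le hx)
    hf₀.integrableOn (hfin.mono_set hsub) hK.integrableOn hY (le_trans ?_ hmoment)
  refine setIntegral_mono_set hfin (ae_of_all _ fun x => ?_) hsub.eventuallyLE
  exact mul_nonneg (hf₀0 x) (rpow_nonneg (div_nonneg (hf₀0 x) (hf0 x)) δ)

end Integral

theorem kl_le_hellinger_bound_general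
    {Ω : Type*} [MeasurableSpace Ω] (μ : Measure Ω)
    (f f₀ : Ω → ℝ)
    (hf0 : ∀ x, 0 ≤ f x) (hf₀0 : ∀ x, 0 ≤ f₀ x)
    (hf : ∫ x, f x ∂μ = 1) (hf₀ : ∫ x, f₀ x ∂μ = 1)
    (ε δ Mδ : ℝ) (hε : 0 < ε) (hδ : 0 < δ) (hMδ : 0 < Mδ)
    (hhell : ∫ x, (Real.sqrt (f x) - Real.sqrt (f₀ x))^2 ∂μ ≤ ε ^ 2)
    (hMδdef : Mδ ^ 2
      = ∫ x in {x | Real.exp (1 / δ) ≤ f₀ x / f x}, f₀ x * (f₀ x / f x) ^ δ ∂μ)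
    (hfin : IntegrableOn (fun x => f₀ x * (f₀ x / f x) ^ δ)
      {x | Real.exp (1 / δ) ≤ f₀ x / f x} μ) :
    ∫ x, f₀ x * Real.log (f₀ x / f x) ∂μ
      ≤ (6 + 2 * Real.log 2 / (1 - Real.exp (-1)) ^ 2
          + (8 / δ) * max 1 (Real.log (Mδ / ε))) * ε ^ 2 := by
  set c := 1 - exp (-1)
  set M := max 1 (log (Mδ / ε))
  have hM : 1 ≤ M := le_max_left _ _
  have hexp : exp (-1) < 0.368 := exp_neg_one_lt_d9.trans (by norm_num)
  have hc : 0.632 < c := by simp only [c]; linarith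
  by_cases hK : Integrable (fun x => f₀ x * log (f₀ x / f x)) μ
  swap
  · rw [integral_undef hK]
    exact mul_nonneg (by positivity) (sq_nonneg ε)
  have hf_int : Integrable f μ := .of_integral_ne_zero (hf ▸ one_ne_zero)
  have hf₀_int : Integrable f₀ μ := .of_integral_ne_zero (hf₀ ▸ one_ne_zero)
  set κ := 2 + 1 / δ
  set A := {x | exp κ ≤ f₀ x / f x}
  set pA := ∫ x in A, f₀ x ∂μ
  have hκ : 2 ≤ κ := le_add_of_nonneg_right (by positivity)
  have hAmeas : NullMeasurableSet A μ := nullMeasurableSet_exp_le_div κ hf_int.1 hf₀_int.1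
  have hpA0 : 0 ≤ pA := setIntegral_nonneg_of_ae_restrict (ae_of_all _ hf₀0)
  have hAc : ∫ x in Aᶜ, f₀ x * log (f₀ x / f x) ∂μ ≤ (1 + 2 * κ) * ε ^ 2 :=
    (setIntegral_compl_mul_log_div_le hκ hf_int hf₀_int hf0 hf₀0 (by rw [hf, hf₀]) hK).trans
      (by gcongr)
  have hA : δ * ∫ x in A, f₀ x * log (f₀ x / f x) ∂μ ≤ 2 * pA * M + exp (-1) * ε ^ 2 :=
    (mul_setIntegral_mul_log_div_le (le_add_of_nonneg_left zero_le_two) hf_int.1 hf₀_int hf0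
      hf₀0 hK (by positivity) hfin hMδdef.ge).trans
      ((mul_log_sq_div_le hpA0 hMδ.ne' hε).trans (by gcongr; exact le_max_right _ _))
  have hpA : c ^ 2 * pA ≤ ε ^ 2 := by
    have : exp (-(κ / 2)) ≤ exp (-1) := exp_le_exp.2 (by linarith)
    calc c ^ 2 * pA ≤ (1 - exp (-(κ / 2))) ^ 2 * pA := by gcongr; linarith
      _ ≤ ε ^ 2 := (sq_one_sub_exp_mul_setIntegral_le (by linarith) hf_int hf₀_int hf0).trans hhell
  have hpA' : pA ≤ 2.51 * ε ^ 2 := by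
    have hc2 : 0.3994 < c ^ 2 := by nlinarith
    nlinarith [mul_le_mul_of_nonneg_right hc2.le hpA0]
  have hδκ : δ * ((1 + 2 * κ) * ε ^ 2) = (5 * δ + 2) * ε ^ 2 := by
    simp only [κ]; field_simp; ring
  have hδrhs : δ * ((6 + 2 * log 2 / c ^ 2 + 8 / δ * M) * ε ^ 2)
      = 6 * δ * ε ^ 2 + 2 * log 2 / c ^ 2 * δ * ε ^ 2 + 8 * M * ε ^ 2 := by field_simp
  refine le_of_mul_le_mul_left ?_ hδ
  rw [hδrhs, ← integral_add_compl₀ hAmeas hK, mul_add]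
  have : 0 ≤ 2 * log 2 / c ^ 2 * δ * ε ^ 2 := by positivity
  linarith [mul_le_mul_of_nonneg_left hAc hδ.le,
    mul_le_mul_of_nonneg_right hpA' (by linarith : 0 ≤ M),
    mul_le_mul_of_nonneg_right hexp.le (sq_nonneg ε), mul_le_mul_of_nonneg_right hM (sq_nonneg ε),
    mul_nonneg hδ.le (sq_nonneg ε)]

/-- Wong–Shen, Theorem 5, first bound: if `ρ²(f, f₀) ≤ ε²`,
`M_δ² = ∫_{f₀/f ≥ e^{1/δ}} f₀ (f₀/f)^δ < ∞` for some `δ ∈ (0,1]`, and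
`ε² ≤ (1/2)(1-e⁻¹)²`, then
`∫ f₀ log(f₀/f) ≤ [6 + 2log2/(1-e⁻¹)² + (8/δ) max(1, log(M_δ/ε))] ε²`. -/
theorem kl_le_hellinger_bound
    {Ω : Type*} [MeasurableSpace Ω] (μ : Measure Ω)
    (f f₀ : Ω → ℝ) (hfm : Measurable f) (hf₀m : Measurable f₀)
    (hf0 : ∀ x, 0 ≤ f x) (hf₀0 : ∀ x, 0 ≤ f₀ x)
    (hf : ∫ x, f x ∂μ = 1) (hf₀ : ∫ x, f₀ x ∂μ = 1)
    (ε δ Mδ : ℝ) (hε : 0 < ε) (hδ : 0 < δ) (hδ1 : δ ≤ 1) (hMδ : 0 < Mδ)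
    (hhell : ∫ x, (Real.sqrt (f x) - Real.sqrt (f₀ x))^2 ∂μ ≤ ε ^ 2)
    (hMδdef : Mδ ^ 2
      = ∫ x in {x | Real.exp (1 / δ) ≤ f₀ x / f x}, f₀ x * (f₀ x / f x) ^ δ ∂μ)
    (hfin : IntegrableOn (fun x => f₀ x * (f₀ x / f x) ^ δ)
      {x | Real.exp (1 / δ) ≤ f₀ x / f x} μ)
    (hεsmall : ε ^ 2 ≤ (1 / 2) * (1 - Real.exp (-1)) ^ 2) :
    ∫ x, f₀ x * Real.log (f₀ x / f x) ∂μ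
      ≤ (6 + 2 * Real.log 2 / (1 - Real.exp (-1)) ^ 2
          + (8 / δ) * max 1 (Real.log (Mδ / ε))) * ε ^ 2 :=
  kl_le_hellinger_bound_general μ f f₀ hf0 hf₀0 hf hf₀ ε δ Mδ hε hδ hMδ hhell hMδdef hfin
end

section
/- Let r > 0, A₁ > 0, and N₁ = n^{1/(2r+1)} (log n)^{−1/r}. Then as n → ∞, the sum Σ_{I=1}^{N₁−1} exp(−2A₁ n I^{−2r}) is asymptotically of order (1/(4rA₁ (log n)^{1/r+2})) exp(−2A₁ n^{1/(2r+1)} (log n)²); in particular it is bounded above by a constant times (log n)^{−2−1/r} exp(−2A₁ n^{1/(2r+1)} (log n)²) for large n. -/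
/-!
Write `L = log n`, `N₁ = n^{1/(2r+1)} L^{-1/r}` and `M = ⌊N₁⌋ - 1`. The summands increase in `I`,
so the sum is at most `M exp(-2A₁ n M^{-2r})`. Since `M ≤ N₁ - 1`, Bernoulli's inequality gives
`n M^{-2r} ≥ n N₁^{-2r} (1 + 2r/N₁) = n^{1/(2r+1)} L² + 2r L^{2+1/r}`, and the extra factor
`exp(-4A₁ r L^{2+1/r})` beats both `M ≤ n = e^L` and the required gain `L^{2+1/r}` once `L` is large.
-/

open Finset Filter Real

lemma one_add_mul_le_one_sub_rpow_neg {x p : ℝ} (hx : x < 1) (hp : 0 ≤ p) :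
    1 + p * x ≤ (1 - x) ^ (-p) := by
  have hx' : 0 < 1 - x := by linarith
  calc 1 + p * x ≤ exp (p * x) := by linarith [add_one_le_exp (p * x)]
    _ ≤ exp (log (1 - x) * -p) := exp_le_exp.mpr (by nlinarith [log_le_sub_one_of_pos hx'])
    _ = (1 - x) ^ (-p) := (rpow_def_of_pos hx' _).symm

lemma rpow_neg_mul_one_add_div_le_sub_one_rpow_neg {N p : ℝ} (hN : 1 < N) (hp : 0 ≤ p) :
    N ^ (-p) * (1 + p / N) ≤ (N - 1) ^ (-p) := by
  have hN0 : 0 < N := by linarith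
  have hsplit : N - 1 = N * (1 - 1 / N) := by field_simp
  rw [hsplit, mul_rpow hN0.le (by rw [sub_nonneg, div_le_one hN0]; linarith), ← mul_one_div p]
  gcongr
  exact one_add_mul_le_one_sub_rpow_neg (by rw [div_lt_one hN0]; linarith) hp

lemma sum_Icc_exp_mul_rpow_neg_le {c p : ℝ} (hc : c ≤ 0) (hp : 0 ≤ p) (M : ℕ) :
    ∑ I ∈ Icc 1 M, exp (c * (I : ℝ) ^ (-p)) ≤ M * exp (c * (M : ℝ) ^ (-p)) := by
  calc ∑ I ∈ Icc 1 M, exp (c * (I : ℝ) ^ (-p))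
      ≤ ∑ _I ∈ Icc 1 M, exp (c * (M : ℝ) ^ (-p)) := by
        refine sum_le_sum fun I hI => ?_
        obtain ⟨hI1, hIM⟩ := mem_Icc.mp hI
        refine exp_le_exp.mpr (mul_le_mul_of_nonpos_left ?_ hc)
        exact rpow_le_rpow_of_nonpos (Nat.cast_pos.mpr hI1) (by exact_mod_cast hIM)
          (neg_nonpos.mpr hp)
    _ = M * exp (c * (M : ℝ) ^ (-p)) := by simp

lemma eventually_exp_mul_rpow_le_exp_mul_rpow {c q : ℝ} (hc : 0 < c) (hq : 2 ≤ q) :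
    ∀ᶠ L in atTop, exp L * L ^ q ≤ exp (c * L ^ q) := by
  filter_upwards [eventually_ge_atTop 1, eventually_ge_atTop ((1 + q) / c)] with L hL1 hLc
  have hL0 : 0 ≤ L := by linarith
  have hLq : L ^ q ≤ exp (q * L) := by
    calc L ^ q ≤ exp L ^ q := by gcongr; linarith [add_one_le_exp L]
      _ = exp (q * L) := by rw [← exp_mul, mul_comm]
  have hL2 : L * L ≤ L ^ q := by
    calc L * L = L ^ (2 : ℝ) := by rw [rpow_two, sq]
      _ ≤ L ^ q := rpow_le_rpow_of_exponent_le hL1 hq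
  have hlin : (1 + q) * L ≤ c * L ^ q := by
    calc (1 + q) * L ≤ c * L * L := by
          have := (div_le_iff₀ hc).mp hLc
          nlinarith
      _ ≤ c * L ^ q := by rw [mul_assoc]; gcongr
  calc exp L * L ^ q ≤ exp L * exp (q * L) := by gcongr
    _ = exp ((1 + q) * L) := by rw [← exp_add]; ring_nf
    _ ≤ exp (c * L ^ q) := by gcongr

lemma mul_rpow_neg_two_mul_cutoff {x L r : ℝ} (hx : 0 < x) (hL : 0 < L) (hr : 0 < r) :
    x * (x ^ (1 / (2 * r + 1)) * L ^ (-1 / r)) ^ (-(2 * r)) = x ^ (1 / (2 * r + 1)) * L ^ 2 := by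
  have hx_exp : 1 + 1 / (2 * r + 1) * -(2 * r) = 1 / (2 * r + 1) := by field_simp; ring
  have hL_exp : -1 / r * -(2 * r) = 2 := by field_simp
  rw [mul_rpow (by positivity) (by positivity), ← rpow_mul hx.le, ← rpow_mul hL.le,
    ← mul_assoc, ← rpow_one_add' hx.le (by rw [hx_exp]; positivity), hx_exp, hL_exp, rpow_two]

lemma cutoff_le_self {x r : ℝ} (hr : 0 < r) (hx : 1 ≤ x) (hL : 1 ≤ log x) :
    x ^ (1 / (2 * r + 1)) * log x ^ (-1 / r) ≤ x := by
  calc x ^ (1 / (2 * r + 1)) * log x ^ (-1 / r) ≤ x ^ (1 / (2 * r + 1)) * 1 := by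
        gcongr
        exact rpow_le_one_of_one_le_of_nonpos hL
          (by rw [neg_div]; exact neg_nonpos.mpr (by positivity))
    _ ≤ x := by
        rw [mul_one]
        exact rpow_le_self_of_one_le hx (by rw [div_le_one (by positivity)]; linarith)

lemma add_two_mul_rpow_le_mul_rpow_neg {x r m : ℝ} (hx : 0 < x) (hL : 0 < log x) (hr : 0 < r)
    (hm : 0 < m) (hmN : m + 1 ≤ x ^ (1 / (2 * r + 1)) * log x ^ (-1 / r)) :
    x ^ (1 / (2 * r + 1)) * log x ^ 2 + 2 * r * log x ^ (2 + 1 / r) ≤ x * m ^ (-(2 * r)) := by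
  set L := log x
  set B := x ^ (1 / (2 * r + 1))
  set N := B * L ^ (-1 / r)
  have hN0 : 0 < N := by linarith
  have hBL : x * N ^ (-(2 * r)) = B * L ^ 2 := mul_rpow_neg_two_mul_cutoff hx hL hr
  have hT : B * L ^ 2 / N = L ^ (2 + 1 / r) := by
    rw [mul_div_mul_left _ _ (by positivity), ← rpow_two, ← rpow_sub hL]
    congr 1
    ring
  calc B * L ^ 2 + 2 * r * L ^ (2 + 1 / r) = x * (N ^ (-(2 * r)) * (1 + 2 * r / N)) := by
        rw [← hT, ← hBL]
        ring
    _ ≤ x * (N - 1) ^ (-(2 * r)) := by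
        gcongr
        exact rpow_neg_mul_one_add_div_le_sub_one_rpow_neg (by linarith) (by positivity)
    _ ≤ x * m ^ (-(2 * r)) :=
        mul_le_mul_of_nonneg_left (rpow_le_rpow_of_nonpos hm (by linarith) (by linarith)) hx.le

lemma sum_Icc_exp_le_of_growth {x r A : ℝ} (hr : 0 < r) (hA : 0 < A) (hx : 0 < x)
    (hL : 1 ≤ log x)
    (hgrowth : x * log x ^ (2 + 1 / r) ≤ exp (4 * A * r * log x ^ (2 + 1 / r))) :
    ∑ I ∈ Icc 1 (⌊x ^ (1 / (2 * r + 1)) * log x ^ (-1 / r)⌋₊ - 1),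
        exp (-2 * A * x * (I : ℝ) ^ (-(2 * r)))
      ≤ log x ^ (-(2 : ℝ) - 1 / r) * exp (-2 * A * x ^ (1 / (2 * r + 1)) * log x ^ 2) := by
  set L := log x
  set B := x ^ (1 / (2 * r + 1))
  set N := B * L ^ (-1 / r)
  set T := L ^ (2 + 1 / r)
  set M := ⌊N⌋₊ - 1
  have hL0 : 0 < L := by linarith
  rcases Nat.eq_zero_or_pos M with hM | hM
  · rw [hM, Icc_eq_empty (by norm_num), sum_empty]
    positivity
  have hMN : (M : ℝ) + 1 ≤ N := by
    have := Nat.floor_le (show 0 ≤ N by positivity)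
    rw [show M = ⌊N⌋₊ - 1 from rfl, Nat.cast_sub (by omega)]
    push_cast
    linarith
  have hM0 : (0 : ℝ) < M := Nat.cast_pos.mpr hM
  have hMx : (M : ℝ) ≤ x :=
    (by linarith : (M : ℝ) ≤ N).trans (cutoff_le_self hr ((log_nonneg_iff hx).mp hL0.le) hL)
  have hMT : M * exp (-(4 * A * r * T)) ≤ T⁻¹ := by
    rw [exp_neg, ← div_eq_mul_inv, div_le_iff₀ (exp_pos _), inv_mul_eq_div,
      le_div_iff₀ (by positivity)]
    exact (mul_le_mul_of_nonneg_right hMx (by positivity)).trans hgrowth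
  calc ∑ I ∈ Icc 1 M, exp (-2 * A * x * (I : ℝ) ^ (-(2 * r)))
      ≤ M * exp (-2 * A * x * (M : ℝ) ^ (-(2 * r))) :=
        sum_Icc_exp_mul_rpow_neg_le (by nlinarith) (by positivity) M
    _ ≤ M * exp (-2 * A * (B * L ^ 2 + 2 * r * T)) := by
        refine mul_le_mul_of_nonneg_left (exp_le_exp.mpr ?_) (by positivity)
        rw [mul_assoc (-2 * A)]
        exact mul_le_mul_of_nonpos_left
          (add_two_mul_rpow_le_mul_rpow_neg hx hL0 hr hM0 hMN) (by linarith)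
    _ = M * exp (-(4 * A * r * T)) * exp (-2 * A * B * L ^ 2) := by
        rw [mul_assoc (M : ℝ), ← exp_add]
        congr 2
        ring
    _ ≤ T⁻¹ * exp (-2 * A * B * L ^ 2) := by gcongr
    _ = L ^ (-(2 : ℝ) - 1 / r) * exp (-2 * A * B * L ^ 2) := by
        rw [← rpow_neg hL0.le, neg_add]
        ring_nf

/-- with `N₁ = n^{1/(2r+1)} (log n)^{-1/r}`, the sum
`∑_{I=1}^{N₁-1} exp(-2A₁ n I^{-2r})` is, for large `n`, bounded by a constant times
`(log n)^{-2-1/r} exp(-2A₁ n^{1/(2r+1)} (log n)²)`. -/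
theorem small_partition_sum_bound (r A₁ : ℝ) (hr : 0 < r) (hA₁ : 0 < A₁) :
    ∃ C : ℝ, 0 < C ∧ ∀ᶠ n : ℕ in atTop,
      ∑ I ∈ Finset.Icc 1
          (Nat.floor ((n : ℝ) ^ ((1 : ℝ) / (2 * r + 1)) * (Real.log n) ^ (-(1 : ℝ) / r)) - 1),
        Real.exp (-2 * A₁ * n * (I : ℝ) ^ (-(2 * r)))
      ≤ C * (Real.log n) ^ (-(2 : ℝ) - 1 / r) *
          Real.exp (-2 * A₁ * (n : ℝ) ^ ((1 : ℝ) / (2 * r + 1)) * (Real.log n) ^ 2) := by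
  refine ⟨1, one_pos, ?_⟩
  have hlog : Tendsto (fun n : ℕ => log n) atTop atTop :=
    tendsto_log_atTop.comp tendsto_natCast_atTop_atTop
  have hgrowth := hlog.eventually <| eventually_exp_mul_rpow_le_exp_mul_rpow
    (show 0 < 4 * A₁ * r by positivity) (show (2 : ℝ) ≤ 2 + 1 / r by simp [hr.le])
  filter_upwards [hgrowth, hlog.eventually_ge_atTop 1, eventually_gt_atTop 0] with n hn hL hn0
  have hn0' : (0 : ℝ) < n := Nat.cast_pos.mpr hn0
  rw [exp_log hn0'] at hn
  rw [one_mul]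
  exact sum_Icc_exp_le_of_growth hr hA₁ hn0' hL hn
end
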